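/- Let p be an odd prime not dividing b with m = ν_p(b^{|b|_p} − 1), and let n ≥ 1. If n ≤ m then M_b(p^n) = M_b(p); if n > m then M_b(p^n) = ⋃_{i=0}^{n−m} p^{n−m−i}·M_b(p), where p^j·M_b(p) = {p^j d : d ∈ M_b(p)}. -/

import Mathlib

/-- Multiplicative order of `b` modulo `N`. -/
noncomputable def ord (b N : ℕ) : ℕ := orderOf (b : ZMod N)

/-- The Midy set of `N` to base `b`: divisors `d ≥ 2` of `|b|_N` such that for every
prime `q` dividing `gcd(b^(|b|_N/d) - 1, N)` one has `ν_q(N) ≤ ν_q(d)`. -/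
def MidySet (b N : ℕ) : Set ℕ :=
  {d | 2 ≤ d ∧ d ∣ ord b N ∧
    ∀ q : ℕ, q.Prime → q ∣ Nat.gcd (b ^ (ord b N / d) - 1) N →
      N.factorization q ≤ d.factorization q}

private lemma emult_eq_fact {q n : ℕ} (hq : q.Prime) (hn : n ≠ 0) :
    emultiplicity q n = (n.factorization q : ℕ∞) := by
  have hf : FiniteMultiplicity q n :=
    Nat.finiteMultiplicity_iff.mpr ⟨hq.ne_one, Nat.pos_of_ne_zero hn⟩
  rw [hf.emultiplicity_eq_multiplicity, Nat.multiplicity_eq_factorization hq hn]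

private lemma key_dvd {b : ℕ} (N k : ℕ) (hb : 2 ≤ b) (hN : 1 < N) :
    N ∣ b ^ k - 1 ↔ ord b N ∣ k := by
  have h1 : 1 ≤ b ^ k := Nat.one_le_pow _ _ (by omega)
  calc N ∣ b ^ k - 1 ↔ ((b ^ k - 1 : ℕ) : ZMod N) = 0 :=
        (ZMod.natCast_eq_zero_iff _ _).symm
    _ ↔ (b : ZMod N) ^ k - 1 = 0 := by rw [Nat.cast_sub h1, Nat.cast_pow, Nat.cast_one]
    _ ↔ (b : ZMod N) ^ k = 1 := sub_eq_zero
    _ ↔ ord b N ∣ k := orderOf_dvd_iff_pow_eq_one.symm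

private lemma ord_pos {b N : ℕ} (hN : 1 < N) (hco : Nat.Coprime b N) : 0 < ord b N := by
  haveI : NeZero N := ⟨by omega⟩
  have hu : IsUnit (b : ZMod N) := (ZMod.isUnit_iff_coprime b N).mpr hco
  rw [ord, ← hu.unit_spec, orderOf_units]
  exact orderOf_pos hu.unit

section Main

variable {b p : ℕ} (hb : 2 ≤ b) (hp : p.Prime) (hodd : Odd p) (hpb : ¬ p ∣ b)

include hb hp hpb

private lemma cop : Nat.Coprime b p := (hp.coprime_iff_not_dvd.mpr hpb).symm

private lemma e_pos : 0 < ord b p := ord_pos hp.one_lt (cop hb hp hpb)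

private lemma p_not_dvd_e : ¬ p ∣ ord b p := by
  haveI := Fact.mk hp
  have ha : (b : ZMod p) ≠ 0 := by
    simpa [Ne, ZMod.natCast_eq_zero_iff] using hpb
  have h : ord b p ∣ p - 1 := ZMod.orderOf_dvd_card_sub_one ha
  intro hpe
  have hp2 := hp.two_le
  have hepos := e_pos hb hp hpb
  have h1 := (hpe.trans h)
  have h2 := Nat.le_of_dvd (by omega) h1
  omega

private lemma pow_sub_one_ne_zero {k : ℕ} (hk : k ≠ 0) : b ^ k - 1 ≠ 0 := by
  have : 2 ≤ b ^ k := le_trans hb (Nat.le_self_pow hk b)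
  omega

private lemma p_dvd_base : p ∣ b ^ ord b p - 1 :=
  (key_dvd p (ord b p) hb hp.one_lt).mpr dvd_rfl

private lemma m_pos : 1 ≤ (b ^ ord b p - 1).factorization p :=
  hp.factorization_pos_of_dvd
    (pow_sub_one_ne_zero hb hp hpb (e_pos hb hp hpb).ne')
    (p_dvd_base hb hp hpb)

include hodd

/-- Lifting the exponent in `factorization` form. -/
private lemma lte_fact {t : ℕ} (ht : t ≠ 0) :
    (b ^ (ord b p * t) - 1).factorization p
      = (b ^ ord b p - 1).factorization p + t.factorization p := by
  have hx : ¬ p ∣ b ^ ord b p := fun h => hpb (hp.dvd_of_dvd_pow h)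
  have hxy : p ∣ b ^ ord b p - 1 ^ 1 := by simpa using p_dvd_base hb hp hpb
  have hepos := e_pos hb hp hpb
  have h := Nat.emultiplicity_pow_sub_pow hp hodd (by simpa using hxy) hx t
  rw [one_pow, ← pow_mul] at h
  rw [emult_eq_fact hp (pow_sub_one_ne_zero hb hp hpb (Nat.mul_ne_zero hepos.ne' ht)),
      emult_eq_fact hp (pow_sub_one_ne_zero hb hp hpb hepos.ne'),
      emult_eq_fact hp ht] at h
  exact_mod_cast h

/-- The order of `b` mod `p^n`. -/
private lemma ord_pow {n : ℕ} (hn : 1 ≤ n) :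
    ord b (p ^ n) = ord b p *
      p ^ (n - min n ((b ^ ord b p - 1).factorization p)) := by
  set e := ord b p with he
  set m := (b ^ ord b p - 1).factorization p with hmdef
  set a := n - min n m with ha
  have hm1 : 1 ≤ m := m_pos hb hp hpb
  have hpn : 1 < p ^ n := Nat.one_lt_pow (by omega) hp.one_lt
  have hepos : 0 < e := e_pos hb hp hpb
  apply Nat.dvd_antisymm
  · rw [← key_dvd (p ^ n) _ hb hpn]
    have hfac : (b ^ (e * p ^ a) - 1).factorization p = m + a := by
      rw [lte_fact hb hp hodd hpb (pow_ne_zero a hp.pos.ne')]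
      rw [Nat.Prime.factorization_pow hp, Finsupp.single_eq_same]
    exact (Nat.Prime.pow_dvd_iff_le_factorization hp
        (pow_sub_one_ne_zero hb hp hpb
          (Nat.mul_ne_zero hepos.ne' (pow_ne_zero a hp.pos.ne')))).mpr
      (by rw [hfac]; omega)
  · have hEpos : 0 < ord b (p ^ n) :=
      ord_pos hpn ((cop hb hp hpb).pow_right n)
    have hpnE : p ^ n ∣ b ^ ord b (p ^ n) - 1 :=
      (key_dvd (p ^ n) _ hb hpn).mpr dvd_rfl
    have hpE : p ∣ b ^ ord b (p ^ n) - 1 := dvd_trans (dvd_pow_self p (by omega)) hpnE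
    have heE : e ∣ ord b (p ^ n) := (key_dvd p _ hb hp.one_lt).mp hpE
    obtain ⟨t, htE⟩ := heE
    have ht : t ≠ 0 := by rintro rfl; rw [htE] at hEpos; simp at hEpos
    have hfac' : (b ^ (e * t) - 1).factorization p = m + t.factorization p :=
      lte_fact hb hp hodd hpb (t := t) ht
    rw [htE] at hpnE
    have hle : n ≤ (b ^ (e * t) - 1).factorization p :=
      (Nat.Prime.pow_dvd_iff_le_factorization hp
        (pow_sub_one_ne_zero hb hp hpb (Nat.mul_ne_zero hepos.ne' ht))).mp hpnE
    have hat : p ^ a ∣ t :=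
      (Nat.Prime.pow_dvd_iff_le_factorization hp ht).mpr (by omega)
    rw [htE]
    exact mul_dvd_mul_left e hat

/-- Characterization of the Midy set of `p^n`. -/
private lemma midy_char {n : ℕ} (hn : 1 ≤ n) :
    MidySet b (p ^ n) = {d | 2 ≤ d ∧
      d ∣ ord b p * p ^ (n - min n ((b ^ ord b p - 1).factorization p)) ∧
      ¬ d ∣ p ^ (n - min n ((b ^ ord b p - 1).factorization p))} := by
  set e := ord b p with he
  set m := (b ^ ord b p - 1).factorization p with hmdef
  set a := n - min n m with ha
  have hm1 : 1 ≤ m := m_pos hb hp hpb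
  have hepos : 0 < e := e_pos hb hp hpb
  have hpn : 1 < p ^ n := Nat.one_lt_pow (by omega) hp.one_lt
  have hEeq : ord b (p ^ n) = e * p ^ a := ord_pow hb hp hodd hpb hn
  have han : a < n := by omega
  ext d
  simp only [MidySet, Set.mem_setOf_eq, hEeq]
  constructor
  · rintro ⟨hd2, hdE, hq⟩
    refine ⟨hd2, hdE, fun hdpa => ?_⟩
    -- d ∣ p ^ a ⟹ e ∣ E / d ⟹ p ∣ gcd ⟹ n ≤ ν_p d, contradiction
    have heEd : e ∣ e * p ^ a / d := by
      rw [Nat.dvd_div_iff_mul_dvd hdE, mul_comm d e]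
      exact mul_dvd_mul_left e hdpa
    have hpdvd : p ∣ Nat.gcd (b ^ (e * p ^ a / d) - 1) (p ^ n) :=
      Nat.dvd_gcd ((key_dvd p _ hb hp.one_lt).mpr heEd) (dvd_pow_self p (by omega))
    have hcon := hq p hp hpdvd
    rw [Nat.Prime.factorization_pow hp, Finsupp.single_eq_same] at hcon
    obtain ⟨i, hia, rfl⟩ := (Nat.dvd_prime_pow hp).mp hdpa
    rw [Nat.Prime.factorization_pow hp, Finsupp.single_eq_same] at hcon
    omega
  · rintro ⟨hd2, hdE, hdpa⟩
    refine ⟨hd2, hdE, fun q hq hqg => absurd ?_ hdpa⟩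
    have hqp : q = p := by
      have := hq.dvd_of_dvd_pow (Nat.dvd_gcd_iff.mp hqg).2
      exact (Nat.prime_dvd_prime_iff_eq hq hp).mp this
    subst hqp
    have hpdvd : q ∣ b ^ (e * q ^ a / d) - 1 := (Nat.dvd_gcd_iff.mp hqg).1
    have heEd : e ∣ e * q ^ a / d := (key_dvd q _ hb hp.one_lt).mp hpdvd
    rw [Nat.dvd_div_iff_mul_dvd hdE, mul_comm d e] at heEd
    exact (mul_dvd_mul_iff_left hepos.ne').mp heEd

end Main

theorem stmt6 (b p n m : ℕ) (hb : 2 ≤ b) (hp : p.Prime) (hodd : Odd p)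
    (hpb : ¬ p ∣ b) (hn : 1 ≤ n) (hm : m = (b ^ ord b p - 1).factorization p) :
    (n ≤ m → MidySet b (p ^ n) = MidySet b p) ∧
    (m < n → MidySet b (p ^ n) =
      ⋃ i ∈ Finset.range (n - m + 1), (fun d => p ^ (n - m - i) * d) '' MidySet b p) := by
  subst hm
  set e := ord b p with he
  set m := (b ^ ord b p - 1).factorization p with hmdef
  have hm1 : 1 ≤ m := m_pos hb hp hpb
  have hepos : 0 < e := e_pos hb hp hpb
  have hpe : ¬ p ∣ e := p_not_dvd_e hb hp hpb
  have hchar1 : MidySet b p = {d | 2 ≤ d ∧ d ∣ e} := by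
    have h := midy_char hb hp hodd hpb (n := 1) le_rfl
    rw [pow_one] at h
    rw [h]
    have h0 : 1 - min 1 m = 0 := by omega
    rw [h0]
    ext d
    simp only [Set.mem_setOf_eq, pow_zero, mul_one, Nat.dvd_one]
    constructor
    · rintro ⟨h1, h2, _⟩; exact ⟨h1, h2⟩
    · rintro ⟨h1, h2⟩; exact ⟨h1, h2, by omega⟩
  constructor
  · intro hnm
    rw [midy_char hb hp hodd hpb hn, hchar1]
    have h0 : n - min n m = 0 := by omega
    rw [h0]
    ext d
    simp only [Set.mem_setOf_eq, pow_zero, mul_one, Nat.dvd_one]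
    constructor
    · rintro ⟨h1, h2, _⟩; exact ⟨h1, h2⟩
    · rintro ⟨h1, h2⟩; exact ⟨h1, h2, by omega⟩
  · intro hmn
    rw [midy_char hb hp hodd hpb hn, hchar1]
    have h0 : n - min n m = n - m := by omega
    rw [h0]
    set a := n - m with ha
    ext d
    simp only [Set.mem_setOf_eq, Set.mem_iUnion, Finset.mem_range, Set.mem_image,
      exists_prop]
    constructor
    · rintro ⟨hd2, hdE, hdpa⟩
      -- decompose d = p^j * d'
      set j := d.factorization p with hj
      set d' := d / p ^ j with hd'
      have hdne : d ≠ 0 := by omega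
      have hsplit : p ^ j * d' = d := Nat.ordProj_mul_ordCompl_eq_self d p
      have hEne : e * p ^ a ≠ 0 := Nat.mul_ne_zero hepos.ne' (pow_ne_zero a hp.pos.ne')
      have hja : j ≤ a := by
        have := Nat.factorization_le_iff_dvd hdne hEne |>.mpr hdE
        have h2 := this p
        rw [Nat.factorization_mul hepos.ne' (pow_ne_zero a hp.pos.ne')] at h2
        simp only [Finsupp.coe_add, Pi.add_apply, Nat.Prime.factorization_pow hp,
          Finsupp.single_eq_same, Nat.factorization_eq_zero_of_not_dvd hpe,
          zero_add] at h2
        exact h2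
      have hd'e : d' ∣ e := by
        have h1 : ordCompl[p] d ∣ ordCompl[p] (e * p ^ a) :=
          Nat.ordCompl_dvd_ordCompl_of_dvd hdE p
        have h2 : ordCompl[p] (e * p ^ a) = e := by
          rw [Nat.factorization_mul hepos.ne' (pow_ne_zero a hp.pos.ne')]
          simp only [Finsupp.coe_add, Pi.add_apply, Nat.Prime.factorization_pow hp,
            Finsupp.single_eq_same, Nat.factorization_eq_zero_of_not_dvd hpe, zero_add]
          rw [Nat.mul_div_cancel _ (pow_pos hp.pos a)]
        rwa [h2] at h1
      have hd'2 : 2 ≤ d' := by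
        rcases Nat.lt_or_ge d' 2 with hlt | hge
        · interval_cases d'
          · omega
          · exfalso; apply hdpa
            rw [← hsplit, mul_one]
            exact pow_dvd_pow p hja
        · exact hge
      refine ⟨a - j, by omega, d', ⟨hd'2, hd'e⟩, ?_⟩
      have : a - (a - j) = j := by omega
      rw [this, hsplit]
    · rintro ⟨i, hi, d', ⟨hd'2, hd'e⟩, rfl⟩
      have hd'p : ¬ p ∣ d' := fun h => hpe (h.trans hd'e)
      have hge : d' ≤ p ^ (a - i) * d' := Nat.le_mul_of_pos_left d' (pow_pos hp.pos _)
      refine ⟨by omega, ?_, ?_⟩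
      · rw [mul_comm e (p ^ a)]
        exact mul_dvd_mul (pow_dvd_pow p (by omega)) hd'e
      · intro hdvd
        have hd'dvd : d' ∣ p ^ a := (dvd_mul_left d' (p ^ (a - i))).trans hdvd
        have hco : Nat.Coprime d' (p ^ a) :=
          Nat.Coprime.pow_right a ((hp.coprime_iff_not_dvd.mpr hd'p).symm)
        have : d' = 1 := hco.eq_one_of_dvd hd'dvd
        omega
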